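/- Ordinary substitution β-reduces to hereditary substitution: for any kind K (resp. type D, spine D⃗), variable X, shape k and elimination E, K[X:=E] β-reduces in zero or more steps to K[X:=E]_k (resp. D[X:=E] →β* D[X:=E]_k, and the pointwise statement for spines); moreover E D →β* E ·_k D for reducing application. -/

import Mathlib

set_option autoImplicit true
set_option maxHeartbeats 1000000
set_option linter.unusedVariables false

/-- Shapes (simple kinds): `k ::= ∗ | k → k`. -/
inductive SKind : Type
  | star
  | arr (j k : SKind)
/-! ## Spine-form syntax of Fω.. types and kinds (de Bruijn representation). -/

mutual
/-- Eliminations: a head applied to a spine of arguments, `E ::= F E⃗`. -/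
inductive SpTy : Type
  | elim (h : SpHead) (s : SpSpine)

/-- Heads: `F ::= X | ⊤ | ⊥ | D → E | ∀X:K.E | λX:K.E`. -/
inductive SpHead : Type
  | var (x : ℕ)
  | top
  | bot
  | arr (a b : SpTy)
  | all (k : SpKd) (a : SpTy)
  | lam (k : SpKd) (a : SpTy)

/-- Spines: finite sequences of eliminations. -/
inductive SpSpine : Type
  | nil
  | cons (a : SpTy) (s : SpSpine)

/-- Kinds in spine form: `K ::= A..B | (X:J)→K`. -/
inductive SpKd : Type
  | intv (a b : SpTy)
  | pi (j k : SpKd)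
end

/-- Shape erasure of spine-form kinds: `|A..B| = ∗`, `|(X:J)→K| = |J| → |K|`. -/
def SpKd.shape : SpKd → SKind
  | .intv _ _ => .star
  | .pi j k => .arr j.shape k.shape

/-- Spine concatenation. -/
def SpSpine.append : SpSpine → SpSpine → SpSpine
  | .nil, s' => s'
  | .cons a s, s' => .cons a (s.append s')

/-- (Non-reducing) application of an elimination to a spine. -/
def SpTy.appSp : SpTy → SpSpine → SpTy
  | .elim h s, s' => .elim h (s.append s')

/-- (Non-reducing) application of an elimination to a single argument. -/
def SpTy.app1 (e d : SpTy) : SpTy := e.appSp (.cons d .nil)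

mutual
/-- Shift: increment all variables `≥ c` by one. -/
def SpTy.shift (c : ℕ) : SpTy → SpTy
  | .elim h s => .elim (h.shift c) (s.shift c)

def SpHead.shift (c : ℕ) : SpHead → SpHead
  | .var x => if x < c then .var x else .var (x + 1)
  | .top => .top
  | .bot => .bot
  | .arr a b => .arr (a.shift c) (b.shift c)
  | .all k a => .all (k.shift c) (a.shift (c + 1))
  | .lam k a => .lam (k.shift c) (a.shift (c + 1))

def SpSpine.shift (c : ℕ) : SpSpine → SpSpine
  | .nil => .nil
  | .cons a s => .cons (a.shift c) (s.shift c)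

def SpKd.shift (c : ℕ) : SpKd → SpKd
  | .intv a b => .intv (a.shift c) (b.shift c)
  | .pi j k => .pi (j.shift c) (k.shift (c + 1))
end

/-- Weakening by `n` fresh innermost variables. -/
def SpTy.weaken (n : ℕ) (e : SpTy) : SpTy := (SpTy.shift 0)^[n] e

/-- Weakening of kinds by `n` fresh innermost variables. -/
def SpKd.weaken (n : ℕ) (k : SpKd) : SpKd := (SpKd.shift 0)^[n] k

mutual
/-- Ordinary (capture-avoiding, non-hereditary) substitution on spine form. -/
def SpTy.subst : SpTy → ℕ → SpTy → SpTy
  | .elim (.var y) s, x, v =>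
      if y = x then v.appSp (s.subst x v)
      else .elim (.var (if x < y then y - 1 else y)) (s.subst x v)
  | .elim .top s, x, v => .elim .top (s.subst x v)
  | .elim .bot s, x, v => .elim .bot (s.subst x v)
  | .elim (.arr a b) s, x, v => .elim (.arr (a.subst x v) (b.subst x v)) (s.subst x v)
  | .elim (.all k a) s, x, v =>
      .elim (.all (k.subst x v) (a.subst (x + 1) (v.shift 0))) (s.subst x v)
  | .elim (.lam k a) s, x, v =>
      .elim (.lam (k.subst x v) (a.subst (x + 1) (v.shift 0))) (s.subst x v)

def SpSpine.subst : SpSpine → ℕ → SpTy → SpSpine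
  | .nil, _, _ => .nil
  | .cons a s, x, v => .cons (a.subst x v) (s.subst x v)

def SpKd.subst : SpKd → ℕ → SpTy → SpKd
  | .intv a b, x, v => .intv (a.subst x v) (b.subst x v)
  | .pi j k, x, v => .pi (j.subst x v) (k.subst (x + 1) (v.shift 0))
end

mutual
/-- Hereditary substitution `e[x := v]_k` of the elimination `v` for variable
`x` at shape `k`, defined mutually with reducing application by recursion on
the shape `k`. -/
def SpTy.hsubst : SpTy → ℕ → SKind → SpTy → SpTy
  | .elim (.var y) s, x, k, v =>
      if y = x then SpTy.rappSp v k (s.hsubst x k v)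
      else .elim (.var (if x < y then y - 1 else y)) (s.hsubst x k v)
  | .elim .top s, x, k, v => .elim .top (s.hsubst x k v)
  | .elim .bot s, x, k, v => .elim .bot (s.hsubst x k v)
  | .elim (.arr a b) s, x, k, v =>
      .elim (.arr (a.hsubst x k v) (b.hsubst x k v)) (s.hsubst x k v)
  | .elim (.all j a) s, x, k, v =>
      .elim (.all (j.hsubst x k v) (a.hsubst (x + 1) k (v.shift 0))) (s.hsubst x k v)
  | .elim (.lam j a) s, x, k, v =>
      .elim (.lam (j.hsubst x k v) (a.hsubst (x + 1) k (v.shift 0))) (s.hsubst x k v)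
termination_by e x k v => (sizeOf k, 1, sizeOf e)

/-- Hereditary substitution in spines (pointwise). -/
def SpSpine.hsubst : SpSpine → ℕ → SKind → SpTy → SpSpine
  | .nil, _, _, _ => .nil
  | .cons a s, x, k, v => .cons (a.hsubst x k v) (s.hsubst x k v)
termination_by s x k v => (sizeOf k, 1, sizeOf s)

/-- Hereditary substitution in kinds. -/
def SpKd.hsubst : SpKd → ℕ → SKind → SpTy → SpKd
  | .intv a b, x, k, v => .intv (a.hsubst x k v) (b.hsubst x k v)
  | .pi j k', x, k, v => .pi (j.hsubst x k v) (k'.hsubst (x + 1) k (v.shift 0))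
termination_by K x k v => (sizeOf k, 1, sizeOf K)

/-- Reducing application `d ·_k v` to a single argument:  β-contracts when `d`
is an operator abstraction and `k` is an arrow shape. -/
def SpTy.rapp : SpTy → SKind → SpTy → SpTy
  | d, .star, v => d.app1 v
  | .elim (.lam _ d') .nil, .arr k1 _, v => d'.hsubst 0 k1 v
  | .elim (.var y) s, .arr _ _, v => SpTy.app1 (.elim (.var y) s) v
  | .elim .top s, .arr _ _, v => SpTy.app1 (.elim .top s) v
  | .elim .bot s, .arr _ _, v => SpTy.app1 (.elim .bot s) v
  | .elim (.arr a b) s, .arr _ _, v => SpTy.app1 (.elim (.arr a b) s) v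
  | .elim (.all j a) s, .arr _ _, v => SpTy.app1 (.elim (.all j a) s) v
  | .elim (.lam j a) (.cons b s), .arr _ _, v => SpTy.app1 (.elim (.lam j a) (.cons b s)) v
termination_by d k v => (sizeOf k, 0, 0)

/-- Reducing application `d ·_k s⃗` to a spine, unwinding `s⃗` along `k`. -/
def SpTy.rappSp : SpTy → SKind → SpSpine → SpTy
  | d, _, .nil => d
  | d, .arr k1 k2, .cons e es => SpTy.rappSp (d.rapp (.arr k1 k2) e) k2 es
  | d, .star, .cons e es => d.appSp (.cons e es)
termination_by d k s => (sizeOf k, 0, sizeOf s + 1)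
end
/-! ## One-step β-reduction on spine-form types and kinds: the compatible
closure of `(λX:K.A) B →β A[X:=B]` over all type and kind formers. -/

mutual
inductive SpStepTy : SpTy → SpTy → Prop
  | beta : SpStepTy (.elim (.lam K A) (.cons B s)) ((A.subst 0 B).appSp s)
  | head : SpStepHead h h' → SpStepTy (.elim h s) (.elim h' s)
  | spine : SpStepSp s s' → SpStepTy (.elim h s) (.elim h s')

inductive SpStepHead : SpHead → SpHead → Prop
  | arr₁ : SpStepTy a a' → SpStepHead (.arr a b) (.arr a' b)
  | arr₂ : SpStepTy b b' → SpStepHead (.arr a b) (.arr a b')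
  | all₁ : SpStepKd k k' → SpStepHead (.all k a) (.all k' a)
  | all₂ : SpStepTy a a' → SpStepHead (.all k a) (.all k a')
  | lam₁ : SpStepKd k k' → SpStepHead (.lam k a) (.lam k' a)
  | lam₂ : SpStepTy a a' → SpStepHead (.lam k a) (.lam k a')

inductive SpStepSp : SpSpine → SpSpine → Prop
  | here : SpStepTy a a' → SpStepSp (.cons a s) (.cons a' s)
  | there : SpStepSp s s' → SpStepSp (.cons a s) (.cons a s')

inductive SpStepKd : SpKd → SpKd → Prop
  | intv₁ : SpStepTy a a' → SpStepKd (.intv a b) (.intv a' b)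
  | intv₂ : SpStepTy b b' → SpStepKd (.intv a b) (.intv a b')
  | pi₁ : SpStepKd j j' → SpStepKd (.pi j k) (.pi j' k)
  | pi₂ : SpStepKd k k' → SpStepKd (.pi j k) (.pi j k')
end

/-! Hereditary substitution differs from ordinary substitution only where it substitutes
`E` into a head position and contracts the redexes so created (through `·_k`). Following
the recursion that defines `[X:=E]_k` and `·_k` (on the shape, then on the term): where
`(λY:J.A) ·_(k₁ → k₂) D` contracts to `A[Y:=D]_k₁`, ordinary substitution keeps the redex
`(λY:J.A) D`; one β-step turns it into `A[Y:=D]`, and the claim at the smaller shape `k₁`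
reduces that to `A[Y:=D]_k₁`. Every other case is a congruence. -/

local notation "RTy" => Relation.ReflTransGen SpStepTy
local notation "RHd" => Relation.ReflTransGen SpStepHead
local notation "RSp" => Relation.ReflTransGen SpStepSp
local notation "RKd" => Relation.ReflTransGen SpStepKd

theorem SpSpine.append_nil : ∀ s : SpSpine, s.append .nil = s
  | .nil => rfl
  | .cons a s => congrArg (SpSpine.cons a) s.append_nil

theorem SpSpine.append_assoc : ∀ s t u : SpSpine,
    (s.append t).append u = s.append (t.append u)
  | .nil, _, _ => rfl
  | .cons a s, t, u => congrArg (SpSpine.cons a) (s.append_assoc t u)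

theorem SpTy.appSp_nil : ∀ e : SpTy, e.appSp .nil = e
  | .elim h s => congrArg (SpTy.elim h) s.append_nil

theorem SpTy.appSp_appSp : ∀ (e : SpTy) (s t : SpSpine),
    (e.appSp s).appSp t = e.appSp (s.append t)
  | .elim h s0, s, t => congrArg (SpTy.elim h) (s0.append_assoc s t)

theorem SpTy.appSp_cons (e d : SpTy) (s : SpSpine) :
    e.appSp (.cons d s) = (e.app1 d).appSp s := by
  rw [SpTy.app1, SpTy.appSp_appSp]
  rfl

theorem SpStepSp.append_left : ∀ {s s' : SpSpine}, SpStepSp s s' → ∀ t : SpSpine,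
    SpStepSp (s.append t) (s'.append t)
  | _, _, .here h, _ => .here h
  | _, _, .there h, t => .there (h.append_left t)

theorem SpStepSp.append_right {s s' : SpSpine} (h : SpStepSp s s') :
    ∀ t : SpSpine, SpStepSp (t.append s) (t.append s')
  | .nil => h
  | .cons _ t => .there (h.append_right t)

theorem SpStepTy.appSp {e e' : SpTy} (h : SpStepTy e e') (t : SpSpine) :
    SpStepTy (e.appSp t) (e'.appSp t) := by
  cases h with
  | @beta K A B s =>
      show SpStepTy (.elim (.lam K A) (.cons B (s.append t))) _
      rw [SpTy.appSp_appSp]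
      exact .beta
  | head h => exact .head h
  | spine h => exact .spine (h.append_left t)

theorem red_appSp_left {e e' : SpTy} (h : RTy e e') (t : SpSpine) :
    RTy (e.appSp t) (e'.appSp t) :=
  Relation.ReflTransGen.lift (·.appSp t) (fun _ _ h => h.appSp t) _ _ h

theorem red_appSp_right {s s' : SpSpine} (h : RSp s s') :
    ∀ e : SpTy, RTy (e.appSp s) (e.appSp s')
  | .elim hd t => Relation.ReflTransGen.lift (fun x => SpTy.elim hd (t.append x))
      (fun _ _ h => .spine (h.append_right t)) _ _ h

theorem red_elim {h h' : SpHead} {s s' : SpSpine} (hh : RHd h h') (hs : RSp s s') :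
    RTy (.elim h s) (.elim h' s') :=
  (Relation.ReflTransGen.lift (SpTy.elim · s) (fun _ _ h => .head h) _ _ hh).trans
    (Relation.ReflTransGen.lift (SpTy.elim h' ·) (fun _ _ h => .spine h) _ _ hs)

theorem red_cons {a a' : SpTy} {s s' : SpSpine} (ha : RTy a a') (hs : RSp s s') :
    RSp (.cons a s) (.cons a' s') :=
  (Relation.ReflTransGen.lift (SpSpine.cons · s) (fun _ _ h => .here h) _ _ ha).trans
    (Relation.ReflTransGen.lift (SpSpine.cons a' ·) (fun _ _ h => .there h) _ _ hs)

theorem redHead_arr {a a' b b' : SpTy} (ha : RTy a a') (hb : RTy b b') :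
    RHd (.arr a b) (.arr a' b') :=
  (Relation.ReflTransGen.lift (SpHead.arr · b) (fun _ _ h => .arr₁ h) _ _ ha).trans
    (Relation.ReflTransGen.lift (SpHead.arr a' ·) (fun _ _ h => .arr₂ h) _ _ hb)

theorem redHead_all {j j' : SpKd} {a a' : SpTy} (hj : RKd j j') (ha : RTy a a') :
    RHd (.all j a) (.all j' a') :=
  (Relation.ReflTransGen.lift (SpHead.all · a) (fun _ _ h => .all₁ h) _ _ hj).trans
    (Relation.ReflTransGen.lift (SpHead.all j' ·) (fun _ _ h => .all₂ h) _ _ ha)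

theorem redHead_lam {j j' : SpKd} {a a' : SpTy} (hj : RKd j j') (ha : RTy a a') :
    RHd (.lam j a) (.lam j' a') :=
  (Relation.ReflTransGen.lift (SpHead.lam · a) (fun _ _ h => .lam₁ h) _ _ hj).trans
    (Relation.ReflTransGen.lift (SpHead.lam j' ·) (fun _ _ h => .lam₂ h) _ _ ha)

theorem red_intv {a a' b b' : SpTy} (ha : RTy a a') (hb : RTy b b') :
    RKd (.intv a b) (.intv a' b') :=
  (Relation.ReflTransGen.lift (SpKd.intv · b) (fun _ _ h => .intv₁ h) _ _ ha).trans
    (Relation.ReflTransGen.lift (SpKd.intv a' ·) (fun _ _ h => .intv₂ h) _ _ hb)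

theorem red_pi {j j' k k' : SpKd} (hj : RKd j j') (hk : RKd k k') :
    RKd (.pi j k) (.pi j' k') :=
  (Relation.ReflTransGen.lift (SpKd.pi · k) (fun _ _ h => .pi₁ h) _ _ hj).trans
    (Relation.ReflTransGen.lift (SpKd.pi j' ·) (fun _ _ h => .pi₂ h) _ _ hk)

mutual
theorem SpKd.subst_red_hsubst : ∀ (K : SpKd) (x : ℕ) (k : SKind) (E : SpTy),
    RKd (K.subst x E) (K.hsubst x k E)
  | .intv a b, x, k, E => by
      rw [SpKd.subst, SpKd.hsubst]
      exact red_intv (a.subst_red_hsubst x k E) (b.subst_red_hsubst x k E)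
  | .pi j k', x, k, E => by
      rw [SpKd.subst, SpKd.hsubst]
      exact red_pi (j.subst_red_hsubst x k E) (k'.subst_red_hsubst (x + 1) k (E.shift 0))
termination_by K x k E => (sizeOf k, 1, sizeOf K)

theorem SpTy.subst_red_hsubst : ∀ (D : SpTy) (x : ℕ) (k : SKind) (E : SpTy),
    RTy (D.subst x E) (D.hsubst x k E)
  | .elim (.var y) s, x, k, E => by
      rw [SpTy.subst, SpTy.hsubst]
      split
      · exact (red_appSp_right (s.subst_red_hsubst x k E) E).trans (E.appSp_red_rappSp k _)
      · exact red_elim .refl (s.subst_red_hsubst x k E)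
  | .elim .top s, x, k, E | .elim .bot s, x, k, E => by
      rw [SpTy.subst, SpTy.hsubst]
      exact red_elim .refl (s.subst_red_hsubst x k E)
  | .elim (.arr a b) s, x, k, E => by
      rw [SpTy.subst, SpTy.hsubst]
      exact red_elim (redHead_arr (a.subst_red_hsubst x k E) (b.subst_red_hsubst x k E))
        (s.subst_red_hsubst x k E)
  | .elim (.all j a) s, x, k, E => by
      rw [SpTy.subst, SpTy.hsubst]
      exact red_elim (redHead_all (j.subst_red_hsubst x k E)
        (a.subst_red_hsubst (x + 1) k (E.shift 0))) (s.subst_red_hsubst x k E)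
  | .elim (.lam j a) s, x, k, E => by
      rw [SpTy.subst, SpTy.hsubst]
      exact red_elim (redHead_lam (j.subst_red_hsubst x k E)
        (a.subst_red_hsubst (x + 1) k (E.shift 0))) (s.subst_red_hsubst x k E)
termination_by D x k E => (sizeOf k, 1, sizeOf D)

theorem SpSpine.subst_red_hsubst : ∀ (s : SpSpine) (x : ℕ) (k : SKind) (E : SpTy),
    RSp (s.subst x E) (s.hsubst x k E)
  | .nil, x, k, E => by rw [SpSpine.subst, SpSpine.hsubst]
  | .cons a s, x, k, E => by
      rw [SpSpine.subst, SpSpine.hsubst]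
      exact red_cons (a.subst_red_hsubst x k E) (s.subst_red_hsubst x k E)
termination_by s x k E => (sizeOf k, 1, sizeOf s)

theorem SpTy.app1_red_rapp : ∀ (E : SpTy) (k : SKind) (D : SpTy),
    RTy (E.app1 D) (E.rapp k D)
  | E, .star, D => by rw [SpTy.rapp]
  | .elim (.lam j A) .nil, .arr k₁ k₂, D => by
      rw [SpTy.rapp]
      have hβ : SpStepTy ((SpTy.elim (.lam j A) .nil).app1 D) ((A.subst 0 D).appSp .nil) :=
        .beta
      rw [SpTy.appSp_nil] at hβ
      exact .head hβ (A.subst_red_hsubst 0 k₁ D)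
  | .elim (.var _) _, .arr _ _, _ | .elim .top _, .arr _ _, _ | .elim .bot _, .arr _ _, _
  | .elim (.arr _ _) _, .arr _ _, _ | .elim (.all _ _) _, .arr _ _, _
  | .elim (.lam _ _) (.cons _ _), .arr _ _, _ => by rw [SpTy.rapp]
termination_by E k D => (sizeOf k, 0, 0)

theorem SpTy.appSp_red_rappSp : ∀ (E : SpTy) (k : SKind) (s : SpSpine),
    RTy (E.appSp s) (E.rappSp k s)
  | E, k, .nil => by rw [SpTy.rappSp, SpTy.appSp_nil]
  | E, .arr k₁ k₂, .cons D s => by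
      rw [SpTy.rappSp, SpTy.appSp_cons]
      exact (red_appSp_left (E.app1_red_rapp (.arr k₁ k₂) D) s).trans
        ((E.rapp (.arr k₁ k₂) D).appSp_red_rappSp k₂ s)
  | E, .star, .cons D s => by rw [SpTy.rappSp]
termination_by E k s => (sizeOf k, 0, sizeOf s + 1)
end

/-- **Ordinary substitution β-reduces to hereditary substitution**: for any
kind `K` (resp. type `D`, spine `D⃗`), variable `X`, shape `k` and elimination
`E`, `K[X:=E] →β* K[X:=E]_k` (resp. for types, pointwise for spines); moreover
`E D →β* E ·_k D` for reducing application. -/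
theorem subst_red_hsubst :
    (∀ (K : SpKd) (x : ℕ) (k : SKind) (E : SpTy),
      Relation.ReflTransGen SpStepKd (K.subst x E) (K.hsubst x k E)) ∧
    (∀ (D : SpTy) (x : ℕ) (k : SKind) (E : SpTy),
      Relation.ReflTransGen SpStepTy (D.subst x E) (D.hsubst x k E)) ∧
    (∀ (s : SpSpine) (x : ℕ) (k : SKind) (E : SpTy),
      Relation.ReflTransGen SpStepSp (s.subst x E) (s.hsubst x k E)) ∧
    (∀ (E : SpTy) (k : SKind) (D : SpTy),
      Relation.ReflTransGen SpStepTy (E.app1 D) (E.rapp k D)) :=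
  ⟨SpKd.subst_red_hsubst, SpTy.subst_red_hsubst, SpSpine.subst_red_hsubst,
    SpTy.app1_red_rapp⟩
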